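/- arXiv:2506.24080 — 2 statements merged into one kernel-verified Lean document; each statement's English description precedes it below -/
import Mathlib

section
/- A finite simple graph G admits a link-irregular labeling if and only if for all distinct vertices x, y of G, at least one of the following holds: (a) L(x) ≇ L(y), or (b) both (i) N_a(x) ≠ N_a(y) and (ii) for each integer n ≥ 0, at most one vertex x of G has link L(x) isomorphic to the edgeless graph on n vertices. -/
open SimpleGraph

variable {V : Type*}

/-- Two vertices have isomorphic labeled links: an equivalence of neighborhoods preserving
adjacency and edge labels. -/
def LabeledLinkIso (G : SimpleGraph V) (ℓ : Sym2 V → ℕ+) (u v : V) : Prop :=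
  ∃ e : (G.neighborSet u) ≃ (G.neighborSet v),
    (∀ a b : G.neighborSet u, G.Adj a.1 b.1 ↔ G.Adj (e a).1 (e b).1) ∧
    (∀ a b : G.neighborSet u, G.Adj a.1 b.1 → ℓ s(a.1, b.1) = ℓ s((e a).1, (e b).1))

/-- An edge labeling is link-irregular if distinct vertices have non-isomorphic labeled links. -/
def IsLinkIrregular (G : SimpleGraph V) (ℓ : Sym2 V → ℕ+) : Prop :=
  ∀ u v : V, u ≠ v → ¬ LabeledLinkIso G ℓ u v

/-- A graph admits a link-irregular labeling. -/
def HasLinkIrregularLabeling (G : SimpleGraph V) : Prop :=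
  ∃ ℓ : Sym2 V → ℕ+, IsLinkIrregular G ℓ

/-- The link-irregular labeling number η(G): the minimum number of distinct labels used
on the edges of G over all link-irregular labelings, or ∞ if none exists. -/
noncomputable def linkIrregularNumber (G : SimpleGraph V) : ℕ∞ :=
  sInf {c : ℕ∞ | ∃ ℓ : Sym2 V → ℕ+, IsLinkIrregular G ℓ ∧ c = ((ℓ '' G.edgeSet).ncard : ℕ∞)}

/-- The edge set of the link of x, viewed as a set of edges of G. -/
def linkEdgeSet (G : SimpleGraph V) (x : V) : Set (Sym2 V) :=
  {e | e ∈ G.edgeSet ∧ ∀ v ∈ e, v ∈ G.neighborSet x}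

/-- Active neighborhood. -/
def activeNeighborSet (G : SimpleGraph V) (x : V) : Set V :=
  {u ∈ G.neighborSet x | ∃ w ∈ G.neighborSet x, G.Adj u w}

/-- A graph is cut-irregular if distinct vertex-deleted subgraphs are non-isomorphic. -/
def CutIrregular (H : SimpleGraph V) : Prop :=
  ∀ u v : V, u ≠ v → ¬ Nonempty ((H.induce ({u} : Set V)ᶜ) ≃g (H.induce ({v} : Set V)ᶜ))

/-- The wheel graph W_n: a cycle C_n together with a universal vertex. -/
def wheelGraph (n : ℕ) : SimpleGraph (Option (Fin n)) where
  Adj x y :=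
    match x, y with
    | none, none => False
    | none, some _ => True
    | some _, none => True
    | some i, some j => (cycleGraph n).Adj i j
  symm := by
    constructor
    rintro (_|i) (_|j) h
    · exact h
    · trivial
    · trivial
    · exact (cycleGraph n).adj_symm h
  loopless := by
    constructor
    rintro (_|i) h
    · exact h
    · exact (cycleGraph n).loopless.irrefl i h

/-- The join of two graphs. -/
def graphJoin {W : Type*} (G : SimpleGraph V) (H : SimpleGraph W) : SimpleGraph (V ⊕ W) where
  Adj x y :=
    match x, y with
    | Sum.inl a, Sum.inl b => G.Adj a b
    | Sum.inr a, Sum.inr b => H.Adj a b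
    | _, _ => True
  symm := by
    constructor
    rintro (a|a) (b|b) h
    · exact G.adj_symm h
    · trivial
    · trivial
    · exact H.adj_symm h
  loopless := by
    constructor
    rintro (a|a) h
    · exact G.loopless.irrefl a h
    · exact H.loopless.irrefl a h

/-- The hypercube graph Q_n. -/
def hypercubeGraph (n : ℕ) : SimpleGraph (Fin n → Bool) where
  Adj x y := (Finset.univ.filter fun i => x i ≠ y i).card = 1
  symm := by
    constructor
    intro x y h
    have : (Finset.univ.filter fun i => y i ≠ x i) = (Finset.univ.filter fun i => x i ≠ y i) := by
      apply Finset.filter_congr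
      intro i _
      simp [ne_comm]
    rw [this]
    exact h
  loopless := by
    constructor
    intro x h
    simp at h

/-!
With an injective labeling, a labeled-link isomorphism from `x` to `y` must send every edge of
the link of `x` to itself, so `x` and `y` have the same active neighbourhood; hence such a labeling
is link-irregular as soon as the condition holds. Conversely, under any labeling two vertices
have isomorphic labeled links if their links are isomorphic and their active neighbourhoods
agree (match the active neighbours identically and the isolated ones arbitrarily: only active
neighbours carry link edges), or if their links are edgeless of the same order.
-/

theorem Set.exists_equiv_fixing_subset {α : Type*} {A s t : Set α} [Finite s] (hs : A ⊆ s)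
    (ht : A ⊆ t) (e : s ≃ t) : ∃ f : s ≃ t, ∀ u : s, (u : α) ∈ A → (f u : α) = u := by
  classical
  have : Finite A := Finite.Set.subset s hs
  have : Finite (s \ A : Set α) := Finite.Set.subset s sdiff_subset
  have : Finite t := Finite.of_equiv s e
  have hcard : Nat.card (s \ A : Set α) = Nat.card (t \ A : Set α) := by
    have hs' := Nat.card_congr (Equiv.Set.sumDiffSubset hs)
    have ht' := Nat.card_congr (Equiv.Set.sumDiffSubset ht)
    rw [Nat.card_sum] at hs' ht'
    rw [Nat.card_congr e] at hs'
    omega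
  obtain ⟨g⟩ := Finite.card_eq.1 hcard
  refine ⟨(Equiv.Set.sumDiffSubset hs).symm.trans
    ((Equiv.sumCongr (Equiv.refl A) g).trans (Equiv.Set.sumDiffSubset ht)), fun u hu => ?_⟩
  simp [Equiv.Set.sumDiffSubset_symm_apply_of_mem hs hu]

namespace LabeledLinkIso

variable {G : SimpleGraph V} {ℓ : Sym2 V → ℕ+} {x y : V}

theorem symm (h : LabeledLinkIso G ℓ x y) : LabeledLinkIso G ℓ y x := by
  obtain ⟨e, hadj, hlab⟩ := h
  refine ⟨e.symm, fun a b => by simpa using (hadj (e.symm a) (e.symm b)).symm, fun a b hab => ?_⟩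
  have hab' : G.Adj (e.symm a).1 (e.symm b).1 := (hadj _ _).2 (by simpa using hab)
  simpa using (hlab _ _ hab').symm

theorem nonempty_induce_iso (h : LabeledLinkIso G ℓ x y) :
    Nonempty (G.induce (G.neighborSet x) ≃g G.induce (G.neighborSet y)) :=
  let ⟨e, hadj, _⟩ := h
  ⟨⟨e, fun {a b} => (hadj a b).symm⟩⟩

theorem activeNeighborSet_subset (hℓ : Function.Injective ℓ) (h : LabeledLinkIso G ℓ x y) :
    activeNeighborSet G x ⊆ activeNeighborSet G y := by
  obtain ⟨e, hadj, hlab⟩ := h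
  rintro u ⟨hu, w, hw, huw⟩
  have hadj' := (hadj ⟨u, hu⟩ ⟨w, hw⟩).1 huw
  have hmem : u ∈ s((e ⟨u, hu⟩).1, (e ⟨w, hw⟩).1) :=
    hℓ (hlab ⟨u, hu⟩ ⟨w, hw⟩ huw) ▸ Sym2.mem_mk_left u w
  rcases Sym2.mem_iff.1 hmem with hu' | hu'
  · exact hu' ▸ ⟨(e _).2, _, (e _).2, hadj'⟩
  · exact hu' ▸ ⟨(e _).2, _, (e _).2, hadj'.symm⟩

theorem activeNeighborSet_eq (hℓ : Function.Injective ℓ) (h : LabeledLinkIso G ℓ x y) :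
    activeNeighborSet G x = activeNeighborSet G y :=
  (h.activeNeighborSet_subset hℓ).antisymm (h.symm.activeNeighborSet_subset hℓ)

theorem of_iso_bot {W : Type*}
    (hx : Nonempty (G.induce (G.neighborSet x) ≃g (⊥ : SimpleGraph W)))
    (hy : Nonempty (G.induce (G.neighborSet y) ≃g (⊥ : SimpleGraph W))) :
    LabeledLinkIso G ℓ x y := by
  obtain ⟨φ⟩ := hx
  obtain ⟨ψ⟩ := hy
  have hx' : ∀ a b : G.neighborSet x, ¬ G.Adj a.1 b.1 := fun a b h => φ.map_rel_iff.2 h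
  have hy' : ∀ a b : G.neighborSet y, ¬ G.Adj a.1 b.1 := fun a b h => ψ.map_rel_iff.2 h
  exact ⟨φ.toEquiv.trans ψ.toEquiv.symm, fun a b => iff_of_false (hx' a b) (hy' _ _),
    fun a b h => absurd h (hx' a b)⟩

theorem of_activeNeighborSet_eq [Finite (G.neighborSet x)]
    (hiso : Nonempty (G.induce (G.neighborSet x) ≃g G.induce (G.neighborSet y)))
    (hA : activeNeighborSet G x = activeNeighborSet G y) : LabeledLinkIso G ℓ x y := by
  have hAx : activeNeighborSet G x ⊆ G.neighborSet x := fun _ hu => hu.1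
  have hAy : activeNeighborSet G x ⊆ G.neighborSet y := hA ▸ fun _ hu => hu.1
  obtain ⟨e, he⟩ := Set.exists_equiv_fixing_subset hAx hAy hiso.some.toEquiv
  have hactive : ∀ a b : G.neighborSet x, G.Adj a.1 b.1 → a.1 ∈ activeNeighborSet G x :=
    fun a b h => ⟨a.2, b.1, b.2, h⟩
  have hpre : ∀ a : G.neighborSet x,
      (e a).1 ∈ activeNeighborSet G x → a.1 ∈ activeNeighborSet G x := by
    intro a ha
    have hfix : e ⟨_, hAx ha⟩ = e a := Subtype.ext (he _ ha)
    exact e.injective hfix ▸ ha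
  have hfixed : ∀ a b : G.neighborSet x, G.Adj a.1 b.1 → (e a).1 = a.1 ∧ (e b).1 = b.1 :=
    fun a b h => ⟨he a (hactive a b h), he b (hactive b a h.symm)⟩
  refine ⟨e, fun a b => ⟨fun h => ?_, fun h => ?_⟩, fun a b h => ?_⟩
  · rwa [(hfixed a b h).1, (hfixed a b h).2]
  · have ha : (e a).1 ∈ activeNeighborSet G x := hA ▸ ⟨(e a).2, _, (e b).2, h⟩
    have hb : (e b).1 ∈ activeNeighborSet G x := hA ▸ ⟨(e b).2, _, (e a).2, h.symm⟩
    rwa [he a (hpre a ha), he b (hpre b hb)] at h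
  · rw [(hfixed a b h).1, (hfixed a b h).2]

end LabeledLinkIso

theorem stmt_1 {V : Type*} [Fintype V] (G : SimpleGraph V) :
    HasLinkIrregularLabeling G ↔
      ∀ x y : V, x ≠ y →
        (¬ Nonempty ((G.induce (G.neighborSet x)) ≃g (G.induce (G.neighborSet y)))) ∨
        (activeNeighborSet G x ≠ activeNeighborSet G y ∧
          ∀ n : ℕ, ∀ a b : V,
            Nonempty ((G.induce (G.neighborSet a)) ≃g (⊥ : SimpleGraph (Fin n))) →
            Nonempty ((G.induce (G.neighborSet b)) ≃g (⊥ : SimpleGraph (Fin n))) →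
            a = b) := by
  constructor
  · rintro ⟨ℓ, hℓ⟩ x y hxy
    refine or_iff_not_imp_left.2 fun hiso => ⟨fun hA => ?_, fun n a b ha hb => ?_⟩
    · exact hℓ x y hxy (.of_activeNeighborSet_eq (not_not.1 hiso) hA)
    · by_contra hab
      exact hℓ a b hab (.of_iso_bot ha hb)
  · intro hcond
    obtain ⟨f, hf⟩ := Countable.exists_injective_nat (Sym2 V)
    have hinj : Function.Injective (Equiv.pnatEquivNat.symm ∘ f) :=
      Equiv.pnatEquivNat.symm.injective.comp hf
    refine ⟨Equiv.pnatEquivNat.symm ∘ f, fun x y hxy h => ?_⟩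
    rcases hcond x y hxy with hiso | ⟨hA, -⟩
    · exact hiso h.nonempty_induce_iso
    · exact hA (h.activeNeighborSet_eq hinj)
end

section
/- For every n ≥ 4, the cycle graph C_n does not admit a link-irregular labeling. -/
open SimpleGraph

variable {V : Type*}

/-! In a triangle-free graph every link is edgeless, so the labels are invisible to labeled-link
isomorphism and any two vertices of equal degree have isomorphic labeled links. For `n ≥ 4` the
cycle `C_n` is triangle-free and 2-regular. -/

namespace SimpleGraph

variable {G : SimpleGraph V}

theorem CliqueFree.not_adj_of_mem_neighborSet (hG : G.CliqueFree 3) {u a b : V}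
    (ha : a ∈ G.neighborSet u) (hb : b ∈ G.neighborSet u) : ¬ G.Adj a b :=
  fun hab ↦ isIndepSet_neighborSet_of_triangleFree G hG u ha hb hab.ne hab

theorem labeledLinkIso_of_cliqueFree_three (hG : G.CliqueFree 3) (ℓ : Sym2 V → ℕ+) {u v : V}
    (e : G.neighborSet u ≃ G.neighborSet v) : LabeledLinkIso G ℓ u v := by
  refine ⟨e, fun a b ↦ ?_, fun a b hab ↦ (hG.not_adj_of_mem_neighborSet a.2 b.2 hab).elim⟩
  exact iff_of_false (hG.not_adj_of_mem_neighborSet a.2 b.2)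
    (hG.not_adj_of_mem_neighborSet (e a).2 (e b).2)

theorem not_hasLinkIrregularLabeling_of_cliqueFree_three (hG : G.CliqueFree 3) {u v : V}
    [Fintype (G.neighborSet u)] [Fintype (G.neighborSet v)] (huv : u ≠ v)
    (hdeg : G.degree u = G.degree v) : ¬ HasLinkIrregularLabeling G := by
  rintro ⟨ℓ, hℓ⟩
  rw [← card_neighborSet_eq_degree, ← card_neighborSet_eq_degree] at hdeg
  exact hℓ u v huv (labeledLinkIso_of_cliqueFree_three hG ℓ (Fintype.equivOfCardEq hdeg))

theorem cycleGraph_not_adj_sub_one_add_one (n : ℕ) (v : Fin (n + 4)) :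
    ¬ (cycleGraph (n + 4)).Adj (v - 1) (v + 1) := by
  rw [cycleGraph_adj, show v - 1 - (v + 1) = -2 by abel, show v + 1 - (v - 1) = 2 by abel,
    neg_eq_iff_eq_neg]
  simp [Fin.ext_iff, Fin.val_neg, Nat.mod_eq_of_lt (show 2 < n + 4 by omega)]

theorem cycleGraph_cliqueFree_three {n : ℕ} (hn : 4 ≤ n) : (cycleGraph n).CliqueFree 3 := by
  obtain ⟨m, rfl⟩ : ∃ m, n = m + 4 := ⟨n - 4, by omega⟩
  rintro s hs
  obtain ⟨a, b, c, hab, hac, hbc, -⟩ := is3Clique_iff.mp hs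
  rw [← mem_neighborSet, cycleGraph_neighborSet] at hab hac
  rcases hab with rfl | rfl <;> rcases hac with rfl | rfl
  · exact hbc.ne rfl
  · exact cycleGraph_not_adj_sub_one_add_one m a hbc
  · exact cycleGraph_not_adj_sub_one_add_one m a hbc.symm
  · exact hbc.ne rfl

end SimpleGraph

/-- cycles C_n, n ≥ 4, admit no link-irregular labeling. -/
theorem stmt_4 (n : ℕ) (hn : 4 ≤ n) :
    ¬ HasLinkIrregularLabeling (SimpleGraph.cycleGraph n) := by
  obtain ⟨m, rfl⟩ : ∃ m, n = m + 3 := ⟨n - 3, by omega⟩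
  refine not_hasLinkIrregularLabeling_of_cliqueFree_three (cycleGraph_cliqueFree_three hn)
    (u := 0) (v := 1) (by simp) ?_
  rw [cycleGraph_degree_three_le, cycleGraph_degree_three_le]
end
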